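/- There exists a constant C > 0, independent of m and t, and for each positive integer m a smooth function η_m : ℝⁿ×ℝⁿ×ℝᵐ×[0,∞) → [0,1] such that: (1) for each t ≥ 0, η_m(·,·,·,t) is compactly supported; (2) η_m(x,y,z,t) → 1 as m → ∞ for every (x,y,z,t); and (3) L_t(η_m(·,·,·,t))(x,y,z) ≤ C/m for all (x,y,z,t). -/

import Mathlib

noncomputable section

open Real MeasureTheory Filter

/-- The state space ℝⁿ × ℝⁿ × ℝᵐ. -/
abbrev St (n m : ℕ) := (Fin n → ℝ) × (Fin n → ℝ) × (Fin m → ℝ)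

/-- `i`-th component of the gradient of a function on ℝᵏ. -/
def gradp {k : ℕ} (U : (Fin k → ℝ) → ℝ) (x : Fin k → ℝ) (i : Fin k) : ℝ :=
  fderiv ℝ U x (Pi.single i 1)

/-- Partial derivative in the `i`-th x-coordinate. -/
def pX {n m : ℕ} (f : St n m → ℝ) (i : Fin n) (p : St n m) : ℝ :=
  fderiv ℝ f p (Pi.single i 1, 0, 0)

/-- Partial derivative in the `i`-th y-coordinate. -/
def pY {n m : ℕ} (f : St n m → ℝ) (i : Fin n) (p : St n m) : ℝ :=
  fderiv ℝ f p (0, Pi.single i 1, 0)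

/-- Partial derivative in the `j`-th z-coordinate. -/
def pZ {n m : ℕ} (f : St n m → ℝ) (j : Fin m) (p : St n m) : ℝ :=
  fderiv ℝ f p (0, 0, Pi.single j 1)

/-- Squared Euclidean norm of a vector. -/
def sqnorm {k : ℕ} (v : Fin k → ℝ) : ℝ := ∑ i, (v i) ^ 2

/-- Squared Euclidean norm of the full gradient. -/
def gradSq {n m : ℕ} (f : St n m → ℝ) (p : St n m) : ℝ :=
  (∑ i, (pX f i p) ^ 2) + (∑ i, (pY f i p) ^ 2) + (∑ j, (pZ f j p) ^ 2)

/-- The Hamiltonian W(x,y,z) = U(x) + |y|²/2 + |z|²/2. -/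
def Wfun {n m : ℕ} (U : (Fin n → ℝ) → ℝ) (p : St n m) : ℝ :=
  U p.1 + sqnorm p.2.1 / 2 + sqnorm p.2.2 / 2

/-- Normalizing constant Z_T. -/
def Zpart (n m : ℕ) (U : (Fin n → ℝ) → ℝ) (T : ℝ) : ℝ :=
  ∫ p : St n m, Real.exp (-(Wfun U p) / T)

/-- Density of the instantaneous equilibrium μ_T w.r.t. Lebesgue. -/
def muDen (n m : ℕ) (U : (Fin n → ℝ) → ℝ) (T : ℝ) (p : St n m) : ℝ :=
  Real.exp (-(Wfun U p) / T) / Zpart n m U T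

/-- The Gibbs measure μ_T ∝ exp(−W/T). -/
def muT (n m : ℕ) (U : (Fin n → ℝ) → ℝ) (T : ℝ) : Measure (St n m) :=
  volume.withDensity fun p => ENNReal.ofReal (muDen n m U T p)

/-- Generator of the generalised Langevin dynamics at temperature T. -/
def genL {n m : ℕ} (U : (Fin n → ℝ) → ℝ) (A : Matrix (Fin m) (Fin m) ℝ)
    (lam : Matrix (Fin m) (Fin n) ℝ) (T : ℝ) (f : St n m → ℝ) (p : St n m) : ℝ :=
  (∑ i, p.2.1 i * pX f i p)
    - (∑ i, gradp U p.1 i * pY f i p)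
    + (∑ i, (lam.transpose.mulVec p.2.2) i * pY f i p)
    - (∑ j, (lam.mulVec p.2.1) j * pZ f j p)
    - T⁻¹ * (∑ j, (A.transpose.mulVec p.2.2) j * pZ f j p)
    + (∑ i, ∑ j, A i j * pZ (fun q => pZ f j q) i p)

/-- Formal L²(μ_T)-adjoint of the generator. -/
def genLstar {n m : ℕ} (U : (Fin n → ℝ) → ℝ) (A : Matrix (Fin m) (Fin m) ℝ)
    (lam : Matrix (Fin m) (Fin n) ℝ) (T : ℝ) (h : St n m → ℝ) (p : St n m) : ℝ :=
  -(∑ i, p.2.1 i * pX h i p)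
    + (∑ i, gradp U p.1 i * pY h i p)
    - (∑ i, (lam.transpose.mulVec p.2.2) i * pY h i p)
    + (∑ j, (lam.mulVec p.2.1) j * pZ h j p)
    - T⁻¹ * (∑ j, (A.mulVec p.2.2) j * pZ h j p)
    + (∑ i, ∑ j, A i j * pZ (fun q => pZ h j q) i p)

/-- Formal Lebesgue adjoint L_T^⊤ (Fokker–Planck operator). -/
def genLadj {n m : ℕ} (U : (Fin n → ℝ) → ℝ) (A : Matrix (Fin m) (Fin m) ℝ)
    (lam : Matrix (Fin m) (Fin n) ℝ) (T : ℝ) (g : St n m → ℝ) (p : St n m) : ℝ :=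
  -(∑ i, p.2.1 i * pX g i p)
    + (∑ i, (gradp U p.1 i - (lam.transpose.mulVec p.2.2) i) * pY g i p)
    + (∑ j, ((lam.mulVec p.2.1) j + T⁻¹ * (A.transpose.mulVec p.2.2) j) * pZ g j p)
    + T⁻¹ * A.trace * g p
    + (∑ i, ∑ j, A i j * pZ (fun q => pZ g j q) i p)

/-- Operator norm of a matrix (Euclidean → Euclidean). -/
def opNorm {a b : ℕ} (M : Matrix (Fin a) (Fin b) ℝ) : ℝ :=
  sSup {c : ℝ | ∃ v : Fin b → ℝ, sqnorm v ≤ 1 ∧ c = Real.sqrt (sqnorm (M.mulVec v))}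

/-- The Lyapunov function R(x,y,z,T). -/
def Rfun {n m : ℕ} (U : (Fin n → ℝ) → ℝ) (lamInv : Matrix (Fin n) (Fin m) ℝ)
    (δ T : ℝ) (p : St n m) : ℝ :=
  Wfun U p + δ * T * ((∑ i, p.2.1 i * (lamInv.mulVec p.2.2) i) + (∑ i, p.1 i * p.2.1 i) / 2)

/-- Full gradient indexed by x-, y-, z-coordinates. -/
def fullGrad {n m : ℕ} (f : St n m → ℝ) (p : St n m) : (Fin n ⊕ (Fin n ⊕ Fin m)) → ℝ :=
  Sum.elim (fun i => pX f i p) (Sum.elim (fun i => pY f i p) (fun j => pZ f j p))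

/-- Gateaux derivative dΦ(h).g of a map on functions. -/
def gateaux {n m : ℕ} (Φ : (St n m → ℝ) → St n m → ℝ) (h g : St n m → ℝ) (p : St n m) : ℝ :=
  deriv (fun s : ℝ => Φ (fun q => h q + s * g q) p) 0

/-- Γ_{L_T*,Φ}(h) := ½ (L_T*(Φ(h)) − dΦ(h).(L_T* h)). -/
def GammaPhi {n m : ℕ} (U : (Fin n → ℝ) → ℝ) (A : Matrix (Fin m) (Fin m) ℝ)
    (lam : Matrix (Fin m) (Fin n) ℝ) (T : ℝ)
    (Φ : (St n m → ℝ) → St n m → ℝ) (h : St n m → ℝ) (p : St n m) : ℝ :=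
  (genLstar U A lam T (Φ h) p - gateaux Φ h (genLstar U A lam T h) p) / 2

/-- Φ₁(h) = |2∇ₓh + 8S₀(∇_y h + λ⁻¹∇_z h)|²/h. -/
def Phi1 {n m : ℕ} (lamInv : Matrix (Fin n) (Fin m) ℝ) (S0 : ℝ)
    (g : St n m → ℝ) (p : St n m) : ℝ :=
  (∑ i, (2 * pX g i p + 8 * S0 * (pY g i p + (lamInv.mulVec fun j => pZ g j p) i)) ^ 2) / g p

/-- Φ₂(h) = |∇_y h + S₁λ⁻¹∇_z h|²/h. -/
def Phi2 {n m : ℕ} (lamInv : Matrix (Fin n) (Fin m) ℝ) (S1 : ℝ)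
    (g : St n m → ℝ) (p : St n m) : ℝ :=
  (∑ i, (pY g i p + S1 * (lamInv.mulVec fun j => pZ g j p) i) ^ 2) / g p

/-- β(s) = 1 + β₀ + β₁ s + β₂ s². -/
def betaP (β0 β1 β2 s : ℝ) : ℝ := 1 + β0 + β1 * s + β2 * s ^ 2

/-- Ψ_T(h) = Φ₁(h) + Φ₂(h) + β·h ln h. -/
def PsiT {n m : ℕ} (lamInv : Matrix (Fin n) (Fin m) ℝ) (S0 S1 βc : ℝ)
    (g : St n m → ℝ) (p : St n m) : ℝ :=
  Phi1 lamInv S0 g p + Phi2 lamInv S1 g p + βc * (g p * Real.log (g p))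

/-- λ̂² = max(|λ|², |λᵀ|², |λ⁻¹|², |λ⁻¹||λᵀ|). -/
def lamhatSq {n m : ℕ} (lam : Matrix (Fin m) (Fin n) ℝ)
    (lamInv : Matrix (Fin n) (Fin m) ℝ) : ℝ :=
  max (max (opNorm lam ^ 2) (opNorm lam.transpose ^ 2))
    (max (opNorm lamInv ^ 2) (opNorm lamInv * opNorm lam.transpose))

/-!
Take `η_k = χ(min(T_t, 1) / (k + 1) · log (W + 1 - U_m))`, where
`W = U(x) + |y|²/2 + |z|²/2` is the Hamiltonian and `χ = cutoff` is smooth, equal to `1` on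
`(-∞, 1]` and to `0` on `[2, ∞)`. The quadratic lower bound on `U` makes `η_k` compactly
supported, and `η_k → 1` pointwise because the prefactor tends to `0`. The Hamiltonian part of
`L_T` annihilates `W`, so for a profile `φ`,
`L_T (φ ∘ W) = φ'(W) (tr A - T⁻¹ zᵀAz) + φ''(W) zᵀAz`.
For `φ(w) = χ(a log (w + c))` both `W φ'(W)` and `W φ''(W)` are `O(a)` while
`|zᵀAz| = O(W)`, and `a ≤ min(T, 1)/(k + 1)` absorbs the factor `T⁻¹`; hence
`L_t η_k = O(1/k)` uniformly in `t`.
-/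

open scoped ContDiff Matrix

namespace GLangevin

def cutoff (s : ℝ) : ℝ := smoothTransition (2 - s)

lemma contDiff_cutoff : ContDiff ℝ ∞ cutoff :=
  smoothTransition.contDiff.comp (contDiff_const.sub contDiff_id)

lemma cutoff_mem_Icc (s : ℝ) : cutoff s ∈ Set.Icc (0 : ℝ) 1 :=
  ⟨smoothTransition.nonneg _, smoothTransition.le_one _⟩

lemma cutoff_eq_one {s : ℝ} (hs : s ≤ 1) : cutoff s = 1 :=
  smoothTransition.one_of_one_le (by linarith)

lemma cutoff_eq_zero {s : ℝ} (hs : 2 ≤ s) : cutoff s = 0 :=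
  smoothTransition.zero_of_nonpos (by linarith)

lemma deriv_cutoff_eq_zero {s : ℝ} (hs : s ∉ Set.Icc 1 2) : deriv cutoff s = 0 := by
  rcases not_and_or.1 hs with hs | hs
  · have h : cutoff =ᶠ[nhds s] fun _ => 1 :=
      Filter.eventually_of_mem (Iio_mem_nhds (not_le.1 hs)) fun _ hx => cutoff_eq_one hx.le
    simp [h.deriv_eq]
  · have h : cutoff =ᶠ[nhds s] fun _ => 0 :=
      Filter.eventually_of_mem (Ioi_mem_nhds (not_le.1 hs)) fun _ hx => cutoff_eq_zero hx.le
    simp [h.deriv_eq]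

lemma hasCompactSupport_deriv_cutoff : HasCompactSupport (deriv cutoff) :=
  .intro isCompact_Icc fun _ => deriv_cutoff_eq_zero

lemma exists_abs_deriv_cutoff_le :
    ∃ G, ∀ s, |deriv cutoff s| ≤ G ∧ |deriv (deriv cutoff) s| ≤ G := by
  have h := (contDiff_infty_iff_deriv.1 contDiff_cutoff).2
  obtain ⟨G₁, h₁⟩ := hasCompactSupport_deriv_cutoff.exists_bound_of_continuous h.continuous
  obtain ⟨G₂, h₂⟩ := hasCompactSupport_deriv_cutoff.deriv.exists_bound_of_continuous
    (h.continuous_deriv (by simp))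
  exact ⟨max G₁ G₂, fun s =>
    ⟨(h₁ s).trans (le_max_left _ _), (h₂ s).trans (le_max_right _ _)⟩⟩

def logCutoffDeriv (a v : ℝ) : ℝ := deriv cutoff (a * Real.log v) * (a / v)

def logCutoffDeriv2 (a v : ℝ) : ℝ :=
  (deriv (deriv cutoff) (a * Real.log v) * a - deriv cutoff (a * Real.log v)) * (a / v ^ 2)

lemma hasDerivAt_cutoff_mul_log (a : ℝ) {v : ℝ} (hv : 0 < v) :
    HasDerivAt (fun v => cutoff (a * Real.log v)) (logCutoffDeriv a v) v := by
  have h := (contDiff_cutoff.differentiable (by simp) _).hasDerivAt.comp v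
    ((Real.hasDerivAt_log hv.ne').const_mul a)
  simpa [logCutoffDeriv, div_eq_mul_inv, Function.comp_def] using h

lemma hasDerivAt_logCutoffDeriv (a : ℝ) {v : ℝ} (hv : 0 < v) :
    HasDerivAt (logCutoffDeriv a) (logCutoffDeriv2 a v) v := by
  have hd := (contDiff_infty_iff_deriv.1 contDiff_cutoff).2
  have h1 := (hd.differentiable (by simp) _).hasDerivAt.comp v
    ((Real.hasDerivAt_log hv.ne').const_mul a)
  have h2 := (hasDerivAt_inv hv.ne').const_mul a
  have hf : logCutoffDeriv a = fun w => deriv cutoff (a * Real.log w) * (a * w⁻¹) := by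
    funext w; simp only [logCutoffDeriv, div_eq_mul_inv]
  rw [hf]
  refine (h1.fun_mul h2).congr_deriv ?_
  simp only [logCutoffDeriv2, Function.comp_apply]
  field_simp
  ring

section ProfileBounds

variable {G : ℝ} (hG : ∀ s, |deriv cutoff s| ≤ G ∧ |deriv (deriv cutoff) s| ≤ G)
include hG

lemma abs_logCutoffDeriv_mul_le {a v : ℝ} (ha : 0 ≤ a) (hv : 0 < v) :
    |logCutoffDeriv a v| * v ≤ G * a := by
  rw [logCutoffDeriv, abs_mul, abs_of_nonneg (div_nonneg ha hv.le), mul_assoc,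
    div_mul_cancel₀ a hv.ne']
  exact mul_le_mul_of_nonneg_right (hG _).1 ha

lemma abs_logCutoffDeriv2_mul_le {a v : ℝ} (ha : 0 ≤ a) (ha1 : a ≤ 1) (hv : 1 ≤ v) :
    |logCutoffDeriv2 a v| * v ≤ 2 * G * a := by
  have hG0 : 0 ≤ G := (abs_nonneg _).trans (hG 0).1
  have hv0 : 0 < v := one_pos.trans_le hv
  have hinner : |deriv (deriv cutoff) (a * Real.log v) * a - deriv cutoff (a * Real.log v)|
      ≤ 2 * G := by
    calc _ ≤ |deriv (deriv cutoff) (a * Real.log v)| * a + |deriv cutoff (a * Real.log v)| :=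
          (abs_sub _ _).trans_eq (by rw [abs_mul, abs_of_nonneg ha])
      _ ≤ G * 1 + G := by gcongr; exacts [(hG _).2, (hG _).1]
      _ = 2 * G := by ring
  have hscale : a / v ^ 2 * v ≤ a := by
    rw [pow_two, div_mul_eq_mul_div, mul_div_mul_right _ _ hv0.ne']
    exact div_le_self ha hv
  rw [logCutoffDeriv2, abs_mul, abs_of_nonneg (by positivity : 0 ≤ a / v ^ 2), mul_assoc]
  exact mul_le_mul hinner hscale (by positivity) (by positivity)

end ProfileBounds

section ChainRule

variable {E : Type*} [NormedAddCommGroup E] [NormedSpace ℝ E] {g : E → ℝ}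
  {φ φ' φ'' : ℝ → ℝ}

lemma fderiv_comp_apply_of_hasDerivAt {q : E} (hφ : HasDerivAt φ (φ' (g q)) (g q))
    (hg : DifferentiableAt ℝ g q) (v : E) :
    fderiv ℝ (fun q => φ (g q)) q v = φ' (g q) * fderiv ℝ g q v := by
  have h : HasFDerivAt (fun q => φ (g q)) _ q := hφ.comp_hasFDerivAt q hg.hasFDerivAt
  rw [h.fderiv]
  rfl

lemma fderiv_fderiv_comp_apply (hg : ContDiff ℝ 2 g)
    (hφ : ∀ q, HasDerivAt φ (φ' (g q)) (g q)) {p : E}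
    (hφ' : HasDerivAt φ' (φ'' (g p)) (g p)) (v w : E) :
    fderiv ℝ (fun q => fderiv ℝ (fun q' => φ (g q')) q w) p v
      = φ'' (g p) * fderiv ℝ g p v * fderiv ℝ g p w
        + φ' (g p) * fderiv ℝ (fun q => fderiv ℝ g q w) p v := by
  have hg1 : Differentiable ℝ g := hg.differentiable (by norm_num)
  have hgw : DifferentiableAt ℝ (fun q => fderiv ℝ g q w) p :=
    ((hg.fderiv_right (m := 1) (by norm_num)).differentiable one_ne_zero p).clm_apply
      (differentiableAt_const w)
  simp_rw [fderiv_comp_apply_of_hasDerivAt (hφ _) (hg1 _)]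
  have h : HasFDerivAt (fun q => φ' (g q) * fderiv ℝ g q w) _ p :=
    (hφ'.comp_hasFDerivAt p (hg1 p).hasFDerivAt).fun_mul hgw.hasFDerivAt
  rw [h.fderiv]
  simp only [add_apply, smul_apply, smul_eq_mul, Function.comp_apply]
  ring

end ChainRule

variable {n m : ℕ}

lemma genL_comp (U : (Fin n → ℝ) → ℝ) (A : Matrix (Fin m) (Fin m) ℝ)
    (lam : Matrix (Fin m) (Fin n) ℝ) (T : ℝ) {g : St n m → ℝ} {φ φ' φ'' : ℝ → ℝ}
    (hg : ContDiff ℝ 2 g) (hφ : ∀ q, HasDerivAt φ (φ' (g q)) (g q)) {p : St n m}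
    (hφ' : HasDerivAt φ' (φ'' (g p)) (g p)) :
    genL U A lam T (fun q => φ (g q)) p
      = φ' (g p) * genL U A lam T g p
        + φ'' (g p) * ∑ i, ∑ j, A i j * pZ g i p * pZ g j p := by
  have hg1 : Differentiable ℝ g := hg.differentiable (by norm_num)
  simp only [genL, pX, pY, pZ, fderiv_fderiv_comp_apply hg hφ hφ']
  simp only [fderiv_comp_apply_of_hasDerivAt (hφ _) (hg1 _)]
  simp only [Finset.mul_sum, mul_add, mul_sub, Finset.sum_add_distrib]
  simp only [mul_comm, mul_left_comm]
  ring

lemma hasFDerivAt_sqnorm_div_two {k : ℕ} (v : Fin k → ℝ) :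
    HasFDerivAt (fun w => sqnorm w / 2)
      (∑ i, v i • ContinuousLinearMap.proj (R := ℝ) (φ := fun _ : Fin k => ℝ) i) v := by
  have h : ∀ i ∈ Finset.univ, HasFDerivAt (fun w : Fin k → ℝ => w i ^ 2 / 2)
      (v i • ContinuousLinearMap.proj (R := ℝ) (φ := fun _ : Fin k => ℝ) i) v :=
    fun i _ => by
      simpa [Function.comp_def] using ((hasDerivAt_pow 2 (v i)).div_const 2).comp_hasFDerivAt v
        (ContinuousLinearMap.proj (R := ℝ) (φ := fun _ : Fin k => ℝ) i).hasFDerivAt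
  simpa [sqnorm, Finset.sum_div] using HasFDerivAt.fun_sum h

lemma fderiv_Wfun_apply {U : (Fin n → ℝ) → ℝ} (hU : Differentiable ℝ U) (p v : St n m) :
    fderiv ℝ (Wfun U) p v = fderiv ℝ U p.1 v.1 + p.2.1 ⬝ᵥ v.2.1 + p.2.2 ⬝ᵥ v.2.2 := by
  have hx := (hU p.1).hasFDerivAt.comp p (hasFDerivAt_fst (p := p))
  have hy := (hasFDerivAt_sqnorm_div_two p.2.1).comp p
    ((hasFDerivAt_fst (p := p.2)).comp p (hasFDerivAt_snd (p := p)))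
  have hz := (hasFDerivAt_sqnorm_div_two p.2.2).comp p
    ((hasFDerivAt_snd (p := p.2)).comp p (hasFDerivAt_snd (p := p)))
  have h : HasFDerivAt (Wfun U) _ p := (hx.add hy).add hz
  rw [h.fderiv]
  simp [dotProduct]

lemma pX_Wfun {U : (Fin n → ℝ) → ℝ} (hU : Differentiable ℝ U) (i : Fin n) (p : St n m) :
    pX (Wfun U) i p = gradp U p.1 i := by
  simp [pX, fderiv_Wfun_apply hU, gradp]

lemma pY_Wfun {U : (Fin n → ℝ) → ℝ} (hU : Differentiable ℝ U) (i : Fin n) (p : St n m) :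
    pY (Wfun U) i p = p.2.1 i := by
  simp [pY, fderiv_Wfun_apply hU]

lemma pZ_Wfun {U : (Fin n → ℝ) → ℝ} (hU : Differentiable ℝ U) (j : Fin m) (p : St n m) :
    pZ (Wfun U) j p = p.2.2 j := by
  simp [pZ, fderiv_Wfun_apply hU]

lemma pZ_zcoord (i j : Fin m) (p : St n m) :
    pZ (fun q : St n m => q.2.2 j) i p = (Pi.single i 1 : Fin m → ℝ) j := by
  have h := (hasFDerivAt_apply (𝕜 := ℝ) j p.2.2).comp p
    ((hasFDerivAt_snd (p := p.2)).comp p (hasFDerivAt_snd (p := p)))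
  have h' : HasFDerivAt (fun q : St n m => q.2.2 j) _ p := h
  simp [pZ, h'.fderiv]

lemma genL_Wfun {U : (Fin n → ℝ) → ℝ} (hU : Differentiable ℝ U)
    (A : Matrix (Fin m) (Fin m) ℝ) (lam : Matrix (Fin m) (Fin n) ℝ) (T : ℝ) (p : St n m) :
    genL U A lam T (Wfun U) p = A.trace - T⁻¹ * (p.2.2 ⬝ᵥ A *ᵥ p.2.2) := by
  have hUxy : ∑ i, p.2.1 i * gradp U p.1 i = ∑ i, gradp U p.1 i * p.2.1 i :=
    dotProduct_comm _ _
  have hlam : ∑ i, (lamᵀ *ᵥ p.2.2) i * p.2.1 i = ∑ j, (lam *ᵥ p.2.1) j * p.2.2 j := by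
    change (lamᵀ *ᵥ p.2.2) ⬝ᵥ p.2.1 = (lam *ᵥ p.2.1) ⬝ᵥ p.2.2
    rw [Matrix.mulVec_transpose, ← Matrix.dotProduct_mulVec, dotProduct_comm]
  have hA : ∑ j, (Aᵀ *ᵥ p.2.2) j * p.2.2 j = p.2.2 ⬝ᵥ A *ᵥ p.2.2 := by
    change (Aᵀ *ᵥ p.2.2) ⬝ᵥ p.2.2 = _
    rw [Matrix.mulVec_transpose, ← Matrix.dotProduct_mulVec]
  have htr : ∑ i, ∑ j, A i j * (Pi.single i 1 : Fin m → ℝ) j = A.trace := by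
    simp [Pi.single_apply, Matrix.trace]
  simp only [genL, pX_Wfun hU, pY_Wfun hU, pZ_Wfun hU, pZ_zcoord]
  rw [hUxy, hlam, hA, htr]
  ring

def energyCutoff (U : (Fin n → ℝ) → ℝ) (c a : ℝ) (q : St n m) : ℝ :=
  cutoff (a * Real.log (Wfun U q + c))

lemma contDiff_Wfun {U : (Fin n → ℝ) → ℝ} (hU : ContDiff ℝ ∞ U) :
    ContDiff ℝ ∞ (Wfun (m := m) U) := by
  unfold Wfun sqnorm
  fun_prop

lemma contDiff_energyCutoff {U : (Fin n → ℝ) → ℝ} (hU : ContDiff ℝ ∞ U) {c : ℝ}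
    (hpos : ∀ q : St n m, 0 < Wfun U q + c) (a : ℝ) :
    ContDiff ℝ ∞ (energyCutoff (m := m) U c a) :=
  contDiff_cutoff.comp (contDiff_const.mul
    (((contDiff_Wfun hU).add contDiff_const).log fun q => (hpos q).ne'))

lemma genL_energyCutoff {U : (Fin n → ℝ) → ℝ} (hU : ContDiff ℝ ∞ U)
    (A : Matrix (Fin m) (Fin m) ℝ) (lam : Matrix (Fin m) (Fin n) ℝ) (T : ℝ) {c : ℝ}
    (hpos : ∀ q : St n m, 0 < Wfun U q + c) (a : ℝ) (p : St n m) :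
    genL U A lam T (energyCutoff U c a) p
      = logCutoffDeriv a (Wfun U p + c) * (A.trace - T⁻¹ * (p.2.2 ⬝ᵥ A *ᵥ p.2.2))
        + logCutoffDeriv2 a (Wfun U p + c) * (p.2.2 ⬝ᵥ A *ᵥ p.2.2) := by
  have hU1 : Differentiable ℝ U := hU.differentiable (by simp)
  have hquad :
      ∑ i, ∑ j, A i j * pZ (Wfun U) i p * pZ (Wfun U) j p = p.2.2 ⬝ᵥ A *ᵥ p.2.2 := by
    simp only [pZ_Wfun hU1, dotProduct, Matrix.mulVec, Finset.mul_sum]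
    exact Finset.sum_congr rfl fun _ _ => Finset.sum_congr rfl fun _ _ => by ring
  unfold energyCutoff
  rw [← genL_Wfun hU1 A lam T p, ← hquad]
  exact genL_comp U A lam T (φ := fun w => cutoff (a * Real.log (w + c)))
    (φ' := fun w => logCutoffDeriv a (w + c)) (φ'' := fun w => logCutoffDeriv2 a (w + c))
    (contDiff_infty.1 (contDiff_Wfun hU) 2)
    (fun q => (hasDerivAt_cutoff_mul_log a (hpos q)).comp_add_const _ _)
    ((hasDerivAt_logCutoffDeriv a (hpos p)).comp_add_const _ _)

lemma sqnorm_nonneg {k : ℕ} (v : Fin k → ℝ) : 0 ≤ sqnorm v :=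
  Finset.sum_nonneg fun _ _ => sq_nonneg _

lemma one_add_half_sqnorm_le_Wfun {U : (Fin n → ℝ) → ℝ} {Um : ℝ} (hU : ∀ x, Um ≤ U x)
    (q : St n m) : 1 + sqnorm q.2.2 / 2 ≤ Wfun U q + (1 - Um) := by
  simp only [Wfun]
  linarith [hU q.1, sqnorm_nonneg q.2.1]

lemma abs_le_sqrt_sqnorm {k : ℕ} (v : Fin k → ℝ) (i : Fin k) : |v i| ≤ √(sqnorm v) := by
  rw [← Real.sqrt_sq_eq_abs]
  exact Real.sqrt_le_sqrt
    (Finset.single_le_sum (f := fun i => v i ^ 2) (fun _ _ => sq_nonneg _) (Finset.mem_univ i))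

lemma norm_le_sqrt_sqnorm {k : ℕ} (v : Fin k → ℝ) : ‖v‖ ≤ √(sqnorm v) :=
  (pi_norm_le_iff_of_nonneg (Real.sqrt_nonneg _)).2 fun i => abs_le_sqrt_sqnorm v i

lemma abs_dotProduct_mulVec_le {k : ℕ} (A : Matrix (Fin k) (Fin k) ℝ) (z : Fin k → ℝ) :
    |z ⬝ᵥ A *ᵥ z| ≤ (∑ i, ∑ j, |A i j|) * sqnorm z := by
  have hz : ∀ i j, |z i * z j| ≤ sqnorm z := fun i j => by
    rw [abs_mul]
    nlinarith [abs_le_sqrt_sqnorm z i, abs_le_sqrt_sqnorm z j, abs_nonneg (z i),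
      abs_nonneg (z j), Real.sq_sqrt (sqnorm_nonneg z), sq_abs (z i), sq_abs (z j)]
  calc |z ⬝ᵥ A *ᵥ z| = |∑ i, ∑ j, A i j * (z i * z j)| := by
        simp only [dotProduct, Matrix.mulVec, Finset.mul_sum]
        congr 1
        exact Finset.sum_congr rfl fun _ _ => Finset.sum_congr rfl fun _ _ => by ring
    _ ≤ ∑ i, ∑ j, |A i j| * sqnorm z := by
        refine (Finset.abs_sum_le_sum_abs _ _).trans (Finset.sum_le_sum fun i _ => ?_)
        refine (Finset.abs_sum_le_sum_abs _ _).trans (Finset.sum_le_sum fun j _ => ?_)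
        rw [abs_mul]
        exact mul_le_mul_of_nonneg_left (hz i j) (abs_nonneg _)
    _ = (∑ i, ∑ j, |A i j|) * sqnorm z := by simp only [Finset.sum_mul]

lemma abs_trace_le {ι : Type*} [Fintype ι] (A : Matrix ι ι ℝ) :
    |A.trace| ≤ ∑ i, ∑ j, |A i j| :=
  (Finset.abs_sum_le_sum_abs _ _).trans <| Finset.sum_le_sum fun i _ =>
    Finset.single_le_sum (f := fun j => |A i j|) (fun _ _ => abs_nonneg _) (Finset.mem_univ i)

lemma genL_energyCutoff_le {G : ℝ}
    (hG : ∀ s, |deriv cutoff s| ≤ G ∧ |deriv (deriv cutoff) s| ≤ G)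
    {U : (Fin n → ℝ) → ℝ} (hU : ContDiff ℝ ∞ U) (A : Matrix (Fin m) (Fin m) ℝ)
    (lam : Matrix (Fin m) (Fin n) ℝ) {T c a : ℝ} (hT : 0 < T) (ha0 : 0 ≤ a) (ha1 : a ≤ 1)
    (hlow : ∀ q : St n m, 1 + sqnorm q.2.2 / 2 ≤ Wfun U q + c) (p : St n m) :
    genL U A lam T (energyCutoff U c a) p
      ≤ G * (∑ i, ∑ j, |A i j|) * (5 * a + 2 * (a / T)) := by
  have hpos : ∀ q : St n m, 0 < Wfun U q + c := fun q => by
    linarith [hlow q, sqnorm_nonneg q.2.2]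
  rw [genL_energyCutoff hU A lam T hpos a p]
  set v := Wfun U p + c
  set Q := p.2.2 ⬝ᵥ A *ᵥ p.2.2
  set K := ∑ i, ∑ j, |A i j|
  set L₁ := logCutoffDeriv a v
  set L₂ := logCutoffDeriv2 a v
  have hv : 1 ≤ v := by linarith [hlow p, sqnorm_nonneg p.2.2]
  have hK : 0 ≤ K := by positivity
  have hQ : |Q| ≤ 2 * K * v := (abs_dotProduct_mulVec_le A p.2.2).trans (by nlinarith [hlow p])
  have htr : |A.trace| ≤ K * v := (abs_trace_le A).trans (le_mul_of_one_le_right hK hv)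
  have h₁ : |L₁| * v ≤ G * a := abs_logCutoffDeriv_mul_le hG ha0 (by linarith)
  have h₂ : |L₂| * v ≤ 2 * G * a := abs_logCutoffDeriv2_mul_le hG ha0 ha1 hv
  have hsplit : L₁ * (A.trace - T⁻¹ * Q) + L₂ * Q
      ≤ |L₁| * (|A.trace| + T⁻¹ * |Q|) + |L₂| * |Q| := by
    have habs : |A.trace - T⁻¹ * Q| ≤ |A.trace| + T⁻¹ * |Q| := by
      simpa [abs_mul, abs_of_pos (inv_pos.2 hT)] using abs_sub (A.trace) (T⁻¹ * Q)
    have e₁ : L₁ * (A.trace - T⁻¹ * Q) ≤ |L₁| * (|A.trace| + T⁻¹ * |Q|) :=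
      (le_abs_self _).trans ((abs_mul _ _).trans_le (by gcongr))
    have e₂ : L₂ * Q ≤ |L₂| * |Q| := (le_abs_self _).trans (abs_mul _ _).le
    linarith
  calc _ ≤ |L₁| * (|A.trace| + T⁻¹ * |Q|) + |L₂| * |Q| := hsplit
    _ ≤ |L₁| * (K * v + T⁻¹ * (2 * K * v)) + |L₂| * (2 * K * v) := by gcongr
    _ = (|L₁| * v) * K * (1 + 2 / T) + (|L₂| * v) * (2 * K) := by ring
    _ ≤ (G * a) * K * (1 + 2 / T) + (2 * G * a) * (2 * K) := by gcongr
    _ = G * K * (5 * a + 2 * (a / T)) := by ring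

lemma genL_energyCutoff_le_div {G : ℝ}
    (hG : ∀ s, |deriv cutoff s| ≤ G ∧ |deriv (deriv cutoff) s| ≤ G)
    {U : (Fin n → ℝ) → ℝ} (hU : ContDiff ℝ ∞ U) (A : Matrix (Fin m) (Fin m) ℝ)
    (lam : Matrix (Fin m) (Fin n) ℝ) {T c : ℝ} (hT : 0 < T)
    (hlow : ∀ q : St n m, 1 + sqnorm q.2.2 / 2 ≤ Wfun U q + c) {k : ℕ} (hk : 0 < k)
    (p : St n m) :
    genL U A lam T (energyCutoff U c (min T 1 / (k + 1))) p
      ≤ 7 * G * (∑ i, ∑ j, |A i j|) / k := by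
  have hG0 : 0 ≤ G := (abs_nonneg _).trans (hG 0).1
  have hk1 : (1 : ℝ) ≤ k := by exact_mod_cast hk
  set a := min T 1 / (k + 1)
  have ha1 : a ≤ 1 / k :=
    div_le_div₀ zero_le_one (min_le_right _ _) (by positivity) (by linarith)
  have haT : a / T ≤ 1 / k := by
    rw [div_le_iff₀ hT, div_mul_eq_mul_div, one_mul]
    exact div_le_div₀ hT.le (min_le_left _ _) (by positivity) (by linarith)
  calc _ ≤ G * (∑ i, ∑ j, |A i j|) * (5 * a + 2 * (a / T)) :=
        genL_energyCutoff_le hG hU A lam hT (by positivity)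
          (ha1.trans (div_le_one_of_le₀ hk1 (by positivity))) hlow p
    _ ≤ G * (∑ i, ∑ j, |A i j|) * (5 * (1 / k) + 2 * (1 / k)) := by gcongr
    _ = 7 * G * (∑ i, ∑ j, |A i j|) / k := by ring

lemma norm_le_of_Wfun {U : (Fin n → ℝ) → ℝ} {abar : Fin n → ℝ} {Um : ℝ}
    (habar : ∀ i, 0 < abar i) (hUlow : ∀ x, sqnorm (fun i => abar i * x i) + Um ≤ U x)
    (q : St n m) : ‖q‖ ≤ (∑ i, (abar i)⁻¹ + 2) * √(Wfun U q - Um) := by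
  set s := Wfun U q - Um
  have hs : sqnorm (fun i => abar i * q.1 i) + sqnorm q.2.1 / 2 + sqnorm q.2.2 / 2 ≤ s := by
    simp only [s, Wfun]; linarith [hUlow q.1]
  have hx₀ := sqnorm_nonneg (fun i => abar i * q.1 i)
  have hy₀ := sqnorm_nonneg q.2.1
  have hz₀ := sqnorm_nonneg q.2.2
  have hB : 0 ≤ ∑ i, (abar i)⁻¹ := Finset.sum_nonneg fun i _ => (inv_pos.2 (habar i)).le
  have hsqrt : 0 ≤ √s := Real.sqrt_nonneg s
  have hx : ‖q.1‖ ≤ (∑ i, (abar i)⁻¹) * √s := by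
    refine (pi_norm_le_iff_of_nonneg (by positivity)).2 fun i => ?_
    have hS : sqnorm (fun i => abar i * q.1 i) ≤ s := by linarith
    have hi : |abar i * q.1 i| ≤ √s :=
      (abs_le_sqrt_sqnorm (fun i => abar i * q.1 i) i).trans (Real.sqrt_le_sqrt hS)
    calc ‖q.1 i‖ = (abar i)⁻¹ * |abar i * q.1 i| := by
          rw [abs_mul, abs_of_pos (habar i), inv_mul_cancel_left₀ (habar i).ne', Real.norm_eq_abs]
      _ ≤ (∑ i, (abar i)⁻¹) * √s := mul_le_mul
          (Finset.single_le_sum (f := fun i => (abar i)⁻¹) (fun j _ => (inv_pos.2 (habar j)).le)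
            (Finset.mem_univ i)) hi (abs_nonneg _) hB
  have hyz {k : ℕ} (w : Fin k → ℝ) (hw : sqnorm w ≤ 2 * s) : ‖w‖ ≤ 2 * √s :=
    (norm_le_sqrt_sqnorm w).trans <| Real.sqrt_le_iff.2
      ⟨by positivity, by rw [mul_pow, Real.sq_sqrt (by linarith)]; linarith⟩
  rw [Prod.norm_def, Prod.norm_def]
  refine max_le (hx.trans ?_) (max_le ((hyz _ ?_).trans ?_) ((hyz _ ?_).trans ?_))
  all_goals nlinarith

lemma hasCompactSupport_energyCutoff {U : (Fin n → ℝ) → ℝ} {abar : Fin n → ℝ} {Um : ℝ}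
    (habar : ∀ i, 0 < abar i) (hUlow : ∀ x, sqnorm (fun i => abar i * x i) + Um ≤ U x)
    {c a : ℝ} (ha : 0 < a) : HasCompactSupport (energyCutoff (m := m) U c a) := by
  have hB : 0 ≤ ∑ i, (abar i)⁻¹ + 2 :=
    add_nonneg (Finset.sum_nonneg fun i _ => (inv_pos.2 (habar i)).le) zero_le_two
  refine .intro (isCompact_closedBall 0 ((∑ i, (abar i)⁻¹ + 2) * √(exp (2 / a) - c - Um)))
    fun q hq => cutoff_eq_zero ?_
  have hW : exp (2 / a) ≤ Wfun U q + c := by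
    by_contra! h
    exact hq (mem_closedBall_zero_iff.2 ((norm_le_of_Wfun habar hUlow q).trans
      (mul_le_mul_of_nonneg_left (Real.sqrt_le_sqrt (by linarith)) hB)))
  have hlog := Real.log_le_log (exp_pos _) hW
  rwa [Real.log_exp, div_le_iff₀' ha] at hlog

lemma tendsto_energyCutoff (U : (Fin n → ℝ) → ℝ) (c b : ℝ) (q : St n m) :
    Tendsto (fun k : ℕ => energyCutoff U c (b / (k + 1)) q) atTop (nhds 1) := by
  have h : Tendsto (fun k : ℕ => b / ((k : ℝ) + 1) * Real.log (Wfun U q + c))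
      atTop (nhds 0) := by
    simpa [div_eq_mul_inv] using
      (tendsto_one_div_add_atTop_nhds_zero_nat.const_mul b).mul_const (Real.log (Wfun U q + c))
  have hlim := (contDiff_cutoff.continuous.tendsto 0).comp h
  rw [cutoff_eq_one zero_le_one] at hlim
  exact hlim

end GLangevin

open GLangevin

theorem stmt10_general (n m : ℕ)
    (U : (Fin n → ℝ) → ℝ) (hU : ContDiff ℝ (⊤ : ℕ∞) U)
    (abar : Fin n → ℝ) (habar : ∀ i, 0 < abar i)
    (Um : ℝ)
    (hUlow : ∀ x, sqnorm (fun i => abar i * x i) + Um ≤ U x)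
    (A : Matrix (Fin m) (Fin m) ℝ)
    (lam : Matrix (Fin m) (Fin n) ℝ)
    (T : ℝ → ℝ) (hTpos : ∀ t, 0 < T t)
    :
    ∃ C : ℝ, 0 < C ∧ ∃ η : ℕ → ℝ → St n m → ℝ,
      (∀ k : ℕ, ∀ t : ℝ, ContDiff ℝ (⊤ : ℕ∞) (η k t)) ∧
      (∀ k : ℕ, ∀ t : ℝ, ∀ p : St n m, η k t p ∈ Set.Icc (0 : ℝ) 1) ∧
      (∀ k : ℕ, ∀ t : ℝ, 0 ≤ t → HasCompactSupport (η k t)) ∧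
      (∀ t : ℝ, ∀ p : St n m, Tendsto (fun k : ℕ => η k t p) atTop (nhds 1)) ∧
      (∀ k : ℕ, 0 < k → ∀ t : ℝ, 0 ≤ t → ∀ p : St n m,
        genL U A lam (T t) (η k t) p ≤ C / (k : ℝ)) := by
  obtain ⟨G, hG⟩ := exists_abs_deriv_cutoff_le
  have hG0 : 0 ≤ G := (abs_nonneg _).trans (hG 0).1
  have hK0 : 0 ≤ ∑ i, ∑ j, |A i j| := by positivity
  have hlow := one_add_half_sqnorm_le_Wfun (m := m) fun x =>
    (le_add_of_nonneg_left (sqnorm_nonneg _)).trans (hUlow x)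
  have hpos : ∀ q : St n m, 0 < Wfun U q + (1 - Um) := fun q => by
    linarith [hlow q, sqnorm_nonneg q.2.2]
  refine ⟨7 * G * (∑ i, ∑ j, |A i j|) + 1, by positivity,
    fun k t => energyCutoff U (1 - Um) (min (T t) 1 / (k + 1)),
    fun k t => contDiff_energyCutoff hU hpos _, fun k t p => cutoff_mem_Icc _,
    fun k t _ => hasCompactSupport_energyCutoff habar hUlow (by have := hTpos t; positivity),
    fun t p => tendsto_energyCutoff U _ _ p, fun k hk t _ p => ?_⟩
  refine (genL_energyCutoff_le_div hG hU A lam (hTpos t) hlow hk p).trans ?_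
  gcongr
  linarith

/-- smooth compactly supported cutoff functions with small L_t image. -/
theorem stmt10 (n m : ℕ) (hn : 0 < n) (hm : 0 < m) (hnm : n ≤ m)
    (U : (Fin n → ℝ) → ℝ) (hU : ContDiff ℝ (⊤ : ℕ∞) U)
    (D2 : ℝ) (hD2 : ∀ x, ‖fderiv ℝ (fun y => fderiv ℝ U y) x‖ ≤ D2)
    (abar : Fin n → ℝ) (habar : ∀ i, 0 < abar i)
    (r1 r2 Ug : ℝ) (hr1 : 0 < r1) (hr2 : 0 < r2) (hUg : 0 < Ug) (Um UM : ℝ)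
    (hUlow : ∀ x, sqnorm (fun i => abar i * x i) + Um ≤ U x)
    (hUup : ∀ x, U x ≤ sqnorm (fun i => abar i * x i) + UM)
    (hgrad1 : ∀ x, r1 * sqnorm x - Ug ≤ ∑ i, gradp U x i * x i)
    (hgrad2 : ∀ x, sqnorm (gradp U x) ≤ r2 * sqnorm x + Ug)
    (A : Matrix (Fin m) (Fin m) ℝ) (Ac : ℝ) (hAc : 0 < Ac)
    (hApd : ∀ v : Fin m → ℝ, Ac * sqnorm v ≤ ∑ j, v j * A.mulVec v j)
    (lam : Matrix (Fin m) (Fin n) ℝ) (lamInv : Matrix (Fin n) (Fin m) ℝ)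
    (hlamInv : lamInv * lam = 1)
    (T : ℝ → ℝ) (hTpos : ∀ t, 0 < T t) (hTdiff : ContDiff ℝ 1 T)
    (hTlim : Tendsto T atTop (nhds 0))
    (E : ℝ) (hE : UM - Um < E)
    (hTlb : ∀ᶠ t in atTop, E / Real.log t ≤ T t)
    (Ttil : ℝ) (hTtil : 0 < Ttil)
    (hTder : ∀ᶠ t in atTop, -(Ttil / t) ≤ deriv T t ∧ deriv T t ≤ 0)
    (δ₀ : ℝ) (hδ₀ : 0 < δ₀) (hTconst : ∀ t ∈ Set.Icc (0:ℝ) δ₀, T t = T 0)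
    :
    ∃ C : ℝ, 0 < C ∧ ∃ η : ℕ → ℝ → St n m → ℝ,
      (∀ k : ℕ, ∀ t : ℝ, ContDiff ℝ (⊤ : ℕ∞) (η k t)) ∧
      (∀ k : ℕ, ∀ t : ℝ, ∀ p : St n m, η k t p ∈ Set.Icc (0 : ℝ) 1) ∧
      (∀ k : ℕ, ∀ t : ℝ, 0 ≤ t → HasCompactSupport (η k t)) ∧
      (∀ t : ℝ, ∀ p : St n m, Tendsto (fun k : ℕ => η k t p) atTop (nhds 1)) ∧
      (∀ k : ℕ, 0 < k → ∀ t : ℝ, 0 ≤ t → ∀ p : St n m,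
        genL U A lam (T t) (η k t) p ≤ C / (k : ℝ)) :=
  stmt10_general n m U hU abar habar Um hUlow A lam T hTpos
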